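/- Let R be a ring with identity such that APOG(R) ≠ ∅. Then R is a left and right Artinian ring if and only if the vertex set of APOG(R) satisfies the descending chain condition both on its elements that are left ideals of R and on its elements that are right ideals of R. -/

import Mathlib

open scoped Pointwise

/-- `I` is a left ideal of the ring `R`: an additive subgroup with `R·I ⊆ I`. -/
def IsLeftIdeal (R : Type*) [Ring R] (I : AddSubgroup R) : Prop :=
  ∀ r : R, ∀ x ∈ I, r * x ∈ I

/-- `I` is a right ideal of the ring `R`: an additive subgroup with `I·R ⊆ I`. -/
def IsRightIdeal (R : Type*) [Ring R] (I : AddSubgroup R) : Prop :=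
  ∀ r : R, ∀ x ∈ I, x * r ∈ I

/-- `I` is a one-sided (left or right) ideal of `R`. -/
def IsOneSidedIdeal (R : Type*) [Ring R] (I : AddSubgroup R) : Prop :=
  IsLeftIdeal R I ∨ IsRightIdeal R I

/-- `IPO(R)`: the set of all products `I*J` of two one-sided ideals of `R`.
Here `I * J` is the additive subgroup generated by `{a*b : a ∈ I, b ∈ J}`
(the pointwise product of additive subgroups). -/
def IPO (R : Type*) [Ring R] : Set (AddSubgroup R) :=
  {A | ∃ I J : AddSubgroup R, IsOneSidedIdeal R I ∧ IsOneSidedIdeal R J ∧ A = I * J}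

/-- `A` is a vertex of `APOG(R) = Γ(IPO(R))`: a nonzero element of `IPO(R)` that is a
one-sided zero-divisor of the semigroup `IPO(R)`. -/
def APOGVertex (R : Type*) [Ring R] (A : AddSubgroup R) : Prop :=
  A ∈ IPO R ∧ A ≠ ⊥ ∧ ∃ B ∈ IPO R, B ≠ ⊥ ∧ (A * B = ⊥ ∨ B * A = ⊥)

/-- The directed edge `A → B` of `APOG(R)`: both are vertices, `A ≠ B` and `A*B = 0`. -/
def APOGEdge (R : Type*) [Ring R] (A B : AddSubgroup R) : Prop :=
  APOGVertex R A ∧ APOGVertex R B ∧ A ≠ B ∧ A * B = ⊥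

/-- A family `T` of additive subgroups satisfies the descending chain condition. -/
def DCCOn (R : Type*) [Ring R] (T : Set (AddSubgroup R)) : Prop :=
  ∀ f : ℕ → AddSubgroup R, (∀ n, f n ∈ T) → (∀ n, f (n + 1) ≤ f n) →
    ∃ N, ∀ n, N ≤ n → f n = f N

/-- A family `T` of additive subgroups satisfies the ascending chain condition. -/
def ACCOn (R : Type*) [Ring R] (T : Set (AddSubgroup R)) : Prop :=
  ∀ f : ℕ → AddSubgroup R, (∀ n, f n ∈ T) → (∀ n, f n ≤ f (n + 1)) →
    ∃ N, ∀ n, N ≤ n → f n = f N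

/-!
If `X * Y = 0` for nonzero `X, Y ∈ IPO(R)`, pick `0 ≠ z ∈ X`. For a left ideal `L`, both `L z`
and `L ∩ ann_l(z)` are left ideals which are zero or vertices: `(L z) Y = L (z Y) = 0` and
`(L ∩ ann_l(z)) (z R) = 0`. A descending chain of left ideals on which both of these stabilize
stabilizes itself, by the modular law applied to the kernel of `x ↦ x z`.
Right ideals are handled symmetrically with `0 ≠ w ∈ Y`.
-/

namespace AddSubgroup

theorem eq_of_le_of_map_eq_of_inf_ker_eq {G H : Type*} [AddCommGroup G] [AddGroup H]
    (f : G →+ H) {A B : AddSubgroup G} (hle : A ≤ B) (hmap : A.map f = B.map f)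
    (hker : A ⊓ f.ker = B ⊓ f.ker) : A = B :=
  eq_of_le_of_inf_le_of_sup_le hle hker.ge (map_le_map_iff'.1 hmap.ge)

theorem map_top_ne_bot {G H : Type*} [AddGroup G] [AddGroup H] {f : G →+ H} {x : G}
    (hx : f x ≠ 0) : (⊤ : AddSubgroup G).map f ≠ ⊥ :=
  fun h => hx (mem_bot.1 (h ▸ mem_map_of_mem f (mem_top x)))

variable {R : Type*} [NonUnitalNonAssocRing R]

theorem mul_le {M N P : AddSubgroup R} : M * N ≤ P ↔ ∀ m ∈ M, ∀ n ∈ N, m * n ∈ P := by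
  rw [← toAddSubmonoid_le, mul_toAddSubmonoid]
  exact AddSubmonoid.mul_le

theorem mul_mem_mul {M N : AddSubgroup R} {m n : R} (hm : m ∈ M) (hn : n ∈ N) :
    m * n ∈ M * N :=
  AddSubmonoid.mul_mem_mul (M := M.toAddSubmonoid) hm hn

theorem mul_eq_bot_iff {M N : AddSubgroup R} : M * N = ⊥ ↔ ∀ m ∈ M, ∀ n ∈ N, m * n = 0 := by
  simp only [← le_bot_iff, mul_le, mem_bot]

end AddSubgroup

section

variable {R : Type*} [Ring R]

open AddSubgroup AddMonoidHom

theorem DCCOn.mono {S T : Set (AddSubgroup R)} (hT : DCCOn R T) (hST : S ⊆ T) : DCCOn R S :=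
  fun f hf hdesc => hT f (fun n => hST (hf n)) hdesc

theorem DCCOn.insert_bot {S : Set (AddSubgroup R)} (hS : DCCOn R S) : DCCOn R (insert ⊥ S) := by
  intro L hL hdesc
  by_cases hbot : ∃ m, L m = ⊥
  · obtain ⟨m, hm⟩ := hbot
    refine ⟨m, fun n hn => ?_⟩
    rw [hm, ← le_bot_iff, ← hm]
    exact antitone_nat_of_succ_le hdesc hn
  · push Not at hbot
    exact hS L (fun n => (hL n).resolve_left (hbot n)) hdesc

theorem DCCOn.of_map_of_inf_ker {S T : Set (AddSubgroup R)} (hS : DCCOn R S) (f : R →+ R)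
    (hmap : ∀ L ∈ T, L.map f ∈ S) (hker : ∀ L ∈ T, L ⊓ f.ker ∈ S) : DCCOn R T := by
  intro L hL hdesc
  obtain ⟨N₁, hN₁⟩ := hS (fun n => (L n).map f) (fun n => hmap _ (hL n))
    (fun n => map_mono (hdesc n))
  obtain ⟨N₂, hN₂⟩ := hS (fun n => L n ⊓ f.ker) (fun n => hker _ (hL n))
    (fun n => inf_le_inf_right _ (hdesc n))
  refine ⟨max N₁ N₂, fun n hn => ?_⟩
  exact eq_of_le_of_map_eq_of_inf_ker_eq f (antitone_nat_of_succ_le hdesc hn)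
    ((hN₁ n (le_of_max_le_left hn)).trans (hN₁ _ (le_max_left _ _)).symm)
    ((hN₂ n (le_of_max_le_right hn)).trans (hN₂ _ (le_max_right _ _)).symm)

theorem isLeftIdeal_top : IsLeftIdeal R ⊤ := fun _ _ _ => trivial

theorem isRightIdeal_top : IsRightIdeal R ⊤ := fun _ _ _ => trivial

theorem IsLeftIdeal.inf {I J : AddSubgroup R} (hI : IsLeftIdeal R I) (hJ : IsLeftIdeal R J) :
    IsLeftIdeal R (I ⊓ J) :=
  fun r x hx => ⟨hI r x hx.1, hJ r x hx.2⟩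

theorem IsRightIdeal.inf {I J : AddSubgroup R} (hI : IsRightIdeal R I)
    (hJ : IsRightIdeal R J) : IsRightIdeal R (I ⊓ J) :=
  fun r x hx => ⟨hI r x hx.1, hJ r x hx.2⟩

theorem IsLeftIdeal.map_mulRight {L : AddSubgroup R} (hL : IsLeftIdeal R L) (z : R) :
    IsLeftIdeal R (L.map (mulRight z)) := by
  rintro r _ ⟨u, hu, rfl⟩
  exact ⟨r * u, hL r u hu, mul_assoc r u z⟩

theorem IsRightIdeal.map_mulLeft {L : AddSubgroup R} (hL : IsRightIdeal R L) (w : R) :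
    IsRightIdeal R (L.map (mulLeft w)) := by
  rintro r _ ⟨u, hu, rfl⟩
  exact ⟨u * r, hL r u hu, (mul_assoc w u r).symm⟩

theorem isLeftIdeal_ker_mulRight (z : R) : IsLeftIdeal R (mulRight z).ker :=
  fun r x (hx : x * z = 0) => show r * x * z = 0 by rw [mul_assoc, hx, mul_zero]

theorem isRightIdeal_ker_mulLeft (w : R) : IsRightIdeal R (mulLeft w).ker :=
  fun r x (hx : w * x = 0) => show w * (x * r) = 0 by rw [← mul_assoc, hx, zero_mul]

theorem IsLeftIdeal.mem_IPO {L : AddSubgroup R} (hL : IsLeftIdeal R L) : L ∈ IPO R := by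
  refine ⟨⊤, L, Or.inl isLeftIdeal_top, Or.inl hL, le_antisymm (fun x hx => ?_) ?_⟩
  · simpa using mul_mem_mul (mem_top 1) hx
  · exact mul_le.2 fun r _ x hx => hL r x hx

theorem IsRightIdeal.mem_IPO {L : AddSubgroup R} (hL : IsRightIdeal R L) : L ∈ IPO R := by
  refine ⟨L, ⊤, Or.inr hL, Or.inr isRightIdeal_top, le_antisymm (fun x hx => ?_) ?_⟩
  · simpa using mul_mem_mul hx (mem_top 1)
  · exact mul_le.2 fun x hx r _ => hL r x hx

theorem IsLeftIdeal.mem_insert_bot_apogVertex {A B : AddSubgroup R} (hA : IsLeftIdeal R A)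
    (hB : B ∈ IPO R) (hB0 : B ≠ ⊥) (h : A * B = ⊥ ∨ B * A = ⊥) :
    A ∈ insert ⊥ {A | APOGVertex R A ∧ IsLeftIdeal R A} :=
  or_iff_not_imp_left.2 fun hA0 => ⟨⟨hA.mem_IPO, hA0, B, hB, hB0, h⟩, hA⟩

theorem IsRightIdeal.mem_insert_bot_apogVertex {A B : AddSubgroup R} (hA : IsRightIdeal R A)
    (hB : B ∈ IPO R) (hB0 : B ≠ ⊥) (h : A * B = ⊥ ∨ B * A = ⊥) :
    A ∈ insert ⊥ {A | APOGVertex R A ∧ IsRightIdeal R A} :=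
  or_iff_not_imp_left.2 fun hA0 => ⟨⟨hA.mem_IPO, hA0, B, hB, hB0, h⟩, hA⟩

theorem dccOn_isLeftIdeal_of_mul_eq_zero {z : R} (hz : z ≠ 0) {Y : AddSubgroup R}
    (hY : Y ∈ IPO R) (hY0 : Y ≠ ⊥) (hzY : ∀ y ∈ Y, z * y = 0)
    (h : DCCOn R {A | APOGVertex R A ∧ IsLeftIdeal R A}) : DCCOn R {J | IsLeftIdeal R J} := by
  refine h.insert_bot.of_map_of_inf_ker (mulRight z) (fun L hL => ?_) (fun L hL => ?_)
  · refine (IsLeftIdeal.map_mulRight hL z).mem_insert_bot_apogVertex hY hY0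
      (.inl (mul_eq_bot_iff.2 ?_))
    rintro _ ⟨u, -, rfl⟩ y hy
    simp [mul_assoc, hzY y hy]
  · have hzR : IsRightIdeal R ((⊤ : AddSubgroup R).map (mulLeft z)) :=
      isRightIdeal_top.map_mulLeft z
    refine (IsLeftIdeal.inf hL (isLeftIdeal_ker_mulRight z)).mem_insert_bot_apogVertex
      hzR.mem_IPO (map_top_ne_bot (x := 1) (by simpa using hz)) (.inl (mul_eq_bot_iff.2 ?_))
    rintro x ⟨-, hx : x * z = 0⟩ _ ⟨s, -, rfl⟩
    simp [← mul_assoc, hx]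

theorem dccOn_isRightIdeal_of_mul_eq_zero {w : R} (hw : w ≠ 0) {X : AddSubgroup R}
    (hX : X ∈ IPO R) (hX0 : X ≠ ⊥) (hXw : ∀ x ∈ X, x * w = 0)
    (h : DCCOn R {A | APOGVertex R A ∧ IsRightIdeal R A}) : DCCOn R {J | IsRightIdeal R J} := by
  refine h.insert_bot.of_map_of_inf_ker (mulLeft w) (fun L hL => ?_) (fun L hL => ?_)
  · refine (IsRightIdeal.map_mulLeft hL w).mem_insert_bot_apogVertex hX hX0
      (.inr (mul_eq_bot_iff.2 ?_))
    rintro x hx _ ⟨u, -, rfl⟩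
    simp [← mul_assoc, hXw x hx]
  · have hRw : IsLeftIdeal R ((⊤ : AddSubgroup R).map (mulRight w)) :=
      isLeftIdeal_top.map_mulRight w
    refine (IsRightIdeal.inf hL (isRightIdeal_ker_mulLeft w)).mem_insert_bot_apogVertex
      hRw.mem_IPO (map_top_ne_bot (x := 1) (by simpa using hw)) (.inr (mul_eq_bot_iff.2 ?_))
    rintro _ ⟨s, -, rfl⟩ x ⟨-, hx : w * x = 0⟩
    simp [mul_assoc, hx]

end

/-- Suppose `APOG(R) ≠ ∅`.  Then `R` is left and right Artinian iff the
vertex set of `APOG(R)` has DCC both on its members that are left ideals and on its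
members that are right ideals. -/
theorem artinian_iff_vertexSet_dcc (R : Type*) [Ring R]
    (hne : ∃ A : AddSubgroup R, APOGVertex R A) :
    (DCCOn R {J | IsLeftIdeal R J} ∧ DCCOn R {J | IsRightIdeal R J}) ↔
      (DCCOn R {A | APOGVertex R A ∧ IsLeftIdeal R A} ∧
        DCCOn R {A | APOGVertex R A ∧ IsRightIdeal R A}) := by
  refine ⟨fun ⟨hl, hr⟩ => ⟨hl.mono fun _ h => h.2, hr.mono fun _ h => h.2⟩, ?_⟩
  rintro ⟨hvl, hvr⟩
  obtain ⟨X, Y, hX, hY, hX0, hY0, hXY⟩ : ∃ X Y : AddSubgroup R,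
      X ∈ IPO R ∧ Y ∈ IPO R ∧ X ≠ ⊥ ∧ Y ≠ ⊥ ∧ X * Y = ⊥ := by
    obtain ⟨A, hA, hA0, B, hB, hB0, hAB | hBA⟩ := hne
    exacts [⟨A, B, hA, hB, hA0, hB0, hAB⟩, ⟨B, A, hB, hA, hB0, hA0, hBA⟩]
  obtain ⟨z, hzX, hz⟩ := (AddSubgroup.bot_or_exists_ne_zero X).resolve_left hX0
  obtain ⟨w, hwY, hw⟩ := (AddSubgroup.bot_or_exists_ne_zero Y).resolve_left hY0
  rw [AddSubgroup.mul_eq_bot_iff] at hXY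
  exact ⟨dccOn_isLeftIdeal_of_mul_eq_zero hz hY hY0 (hXY z hzX) hvl,
    dccOn_isRightIdeal_of_mul_eq_zero hw hX hX0 (fun x hx => hXY x hx w hwY) hvr⟩
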